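/- arXiv:1307.3975 — 7 statements merged into one kernel-verified Lean document; each statement's English description precedes it below -/
import Mathlib

section
/- Let F be a finite field of order q and characteristic p, and let m ≥ 1 and d ≥ 0 be integers with q - q/p - 1 ≥ d. Suppose g : F^m → F has the property that for every x, h ∈ F^m there exists a univariate polynomial P over F of degree at most d such that P(t) = g(x + t·h) for every t ∈ F. Then g is the evaluation of an m-variate polynomial over F of total degree at most d. -/
/-!
Replace `g` by its reduced representative `G`, whose individual degrees are below `q`. Expanding
`G (x + t h)` and reducing powers of `t` by `t ^ q = t`, the coefficient of `t ^ r` is a polynomial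
in `(x, h)` with individual degrees below `q`; for `r > d` it vanishes on all of `F^m × F^m`, since
every line restriction has degree at most `d`, so it is the zero polynomial. Its coefficient of
`x ^ (e - f) * h ^ f` is `coeff e G * ∏ i, choose (e i) (f i)`, with `r` the reduced exponent of
`∑ f i`. By Lucas' theorem these binomials are nonzero in `F` when each `f i` lies digitwise below
`e i` in base `p`, and lowering the lowest nonzero digit of some `f i` moves `∑ f i` down by at most
`q / p`. So if `∑ e i > d`, the sums `∑ f i` meet a window of length `q / p` on which the reduced
exponent exceeds `d` (this is where `q - q / p - 1 ≥ d` enters), forcing `coeff e G = 0`.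
-/

theorem Nat.le_of_not_dvd_choose {p e f : ℕ} (h : ¬ p ∣ e.choose f) : f ≤ e :=
  le_of_not_gt fun hlt ↦ h (by simp [Nat.choose_eq_zero_of_lt hlt])

namespace Nat.Prime

variable {p : ℕ}

theorem not_dvd_choose_iff (hp : p.Prime) {e f : ℕ} :
    ¬ p ∣ e.choose f ↔ ¬ p ∣ (e % p).choose (f % p) ∧ ¬ p ∣ (e / p).choose (f / p) := by
  have := Fact.mk hp
  rw [Choose.choose_modEq_choose_mod_mul_choose_div_nat.dvd_iff dvd_rfl, hp.dvd_mul, not_or]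

theorem not_dvd_choose_of_le_of_lt (hp : p.Prime) {a b : ℕ} (hba : b ≤ a) (hap : a < p) :
    ¬ p ∣ a.choose b := fun hdvd ↦ by
  have : p ∣ a ! := choose_mul_factorial_mul_factorial hba ▸ (hdvd.mul_right _).mul_right _
  exact hap.not_ge (hp.dvd_factorial.mp this)

/-- Lowering the lowest nonzero base-`p` digit of `f` by one keeps `e.choose f` prime to `p`. -/
theorem exists_pow_le_not_dvd_choose_sub (hp : p.Prime) {e f : ℕ} (hf : f ≠ 0)
    (h : ¬ p ∣ e.choose f) : ∃ k, p ^ k ≤ f ∧ ¬ p ∣ e.choose (f - p ^ k) := by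
  induction f using Nat.strong_induction_on generalizing e with
  | _ f ih =>
  obtain ⟨hlow, hhigh⟩ := hp.not_dvd_choose_iff.mp h
  have hfdiv := Nat.div_add_mod f p
  by_cases hfp : f % p = 0
  · have hf' : f / p ≠ 0 := fun h0 ↦ hf (by rw [← hfdiv, h0, hfp]; rfl)
    obtain ⟨k, hk, hdvd⟩ := ih (f / p) (div_lt_self (pos_of_ne_zero hf) hp.one_lt) hf' hhigh
    have hsub : f - p ^ (k + 1) = p * (f / p - p ^ k) := by
      rw [pow_succ', Nat.mul_sub, ← Nat.add_zero (p * (f / p)), ← hfp, hfdiv]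
    refine ⟨k + 1, ?_, ?_⟩
    · calc p ^ (k + 1) = p * p ^ k := pow_succ' ..
        _ ≤ p * (f / p) := Nat.mul_le_mul_left p hk
        _ ≤ f := Nat.mul_div_le f p
    · rw [hsub, hp.not_dvd_choose_iff, Nat.mul_mod_right, Nat.mul_div_cancel_left _ hp.pos,
        choose_zero_right]
      exact ⟨hp.not_dvd_one, hdvd⟩
  · refine ⟨0, by rw [pow_zero]; omega, ?_⟩
    obtain ⟨hdiv, hmod⟩ : (f - 1) / p = f / p ∧ (f - 1) % p = f % p - 1 :=
      (Nat.div_mod_unique hp.pos).mpr ⟨by omega, by have := mod_lt f hp.pos; omega⟩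
    rw [pow_zero, hp.not_dvd_choose_iff, hdiv, hmod]
    have hle : f % p ≤ e % p := le_of_not_dvd_choose hlow
    exact ⟨hp.not_dvd_choose_of_le_of_lt (by omega) (mod_lt e hp.pos), hhigh⟩

end Nat.Prime

theorem Nat.exists_mem_Ico_of_descent {S : Set ℕ} {N n δ : ℕ} (hN : N ∈ S) (hnN : n ≤ N)
    (hstep : ∀ x ∈ S, n + δ ≤ x → ∃ y ∈ S, y < x ∧ x ≤ y + δ) :
    ∃ y ∈ S, n ≤ y ∧ y < n + δ := by
  induction N using Nat.strong_induction_on with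
  | _ N ih =>
  by_cases hN' : N < n + δ
  · exact ⟨N, hN, hnN, hN'⟩
  · obtain ⟨y, hy, hyN, hNy⟩ := hstep N hN (not_lt.mp hN')
    exact ih y hyN hy (by omega)

theorem Nat.Prime.exists_not_dvd_choose_sum_mem_Ico {σ : Type*} [Fintype σ] {p s : ℕ}
    (hp : p.Prime) (e : σ → ℕ) (he : ∀ i, e i < p ^ s) {n : ℕ} (hn : n ≤ ∑ i, e i) :
    ∃ f : σ → ℕ, (∀ i, ¬ p ∣ (e i).choose (f i)) ∧ n ≤ ∑ i, f i ∧ ∑ i, f i < n + p ^ (s - 1) := by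
  classical
  let S : Set ℕ := {x | ∃ f : σ → ℕ, (∀ i, ¬ p ∣ (e i).choose (f i)) ∧ ∑ i, f i = x}
  have he_mem : ∑ i, e i ∈ S := ⟨e, fun i ↦ by simpa using hp.not_dvd_one, rfl⟩
  suffices hstep : ∀ x ∈ S, n + p ^ (s - 1) ≤ x → ∃ y ∈ S, y < x ∧ x ≤ y + p ^ (s - 1) by
    obtain ⟨_, ⟨f, hf, rfl⟩, hnf, hfn⟩ := Nat.exists_mem_Ico_of_descent he_mem hn hstep
    exact ⟨f, hf, hnf, hfn⟩
  rintro _ ⟨f, hf, rfl⟩ hlarge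
  obtain ⟨i, hi⟩ : ∃ i, f i ≠ 0 := by
    by_contra! h
    simp only [h, Finset.sum_const_zero] at hlarge
    exact (pow_pos hp.pos (s - 1)).ne' (by omega)
  obtain ⟨k, hk, hdvd⟩ := hp.exists_pow_le_not_dvd_choose_sub hi (hf i)
  have hfe : f i ≤ e i := Nat.le_of_not_dvd_choose (hf i)
  have hks : p ^ k ≤ p ^ (s - 1) := by
    have : k < s := (Nat.pow_lt_pow_iff_right hp.one_lt).mp (by linarith [he i])
    exact Nat.pow_le_pow_right hp.pos (by omega)
  have hsum := Finset.sum_update_of_mem (Finset.mem_univ i) f (f i - p ^ k)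
  have hsplit := Finset.sum_eq_add_sum_sdiff_singleton_of_mem (Finset.mem_univ i) f
  have hk0 := pow_pos hp.pos k
  refine ⟨_, ⟨Function.update f i (f i - p ^ k), fun j ↦ ?_, rfl⟩, by omega, by omega⟩
  rcases eq_or_ne j i with rfl | hj
  · simpa using hdvd
  · simpa [hj] using hf j

def reducedExponent (q j : ℕ) : ℕ := if j = 0 then 0 else (j - 1) % (q - 1) + 1

theorem reducedExponent_le {q : ℕ} (hq : 1 < q) (j : ℕ) : reducedExponent q j ≤ q - 1 := by
  unfold reducedExponent
  split_ifs
  · exact Nat.zero_le _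
  · have := Nat.mod_lt (j - 1) (show 0 < q - 1 by omega)
    omega

theorem reducedExponent_eq_sub {q j k : ℕ} (hlow : (q - 1) * k < j)
    (hhigh : j ≤ (q - 1) * (k + 1)) :
    reducedExponent q j = j - (q - 1) * k := by
  rw [Nat.mul_succ] at hhigh
  have hj : j - 1 = (j - 1 - (q - 1) * k) + (q - 1) * k := by omega
  rw [reducedExponent, if_neg (by omega), hj, Nat.add_mul_mod_self_left,
    Nat.mod_eq_of_lt (by omega)]
  omega

theorem pow_reducedExponent {F : Type*} [Field F] [Fintype F] (t : F) (j : ℕ) :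
    t ^ reducedExponent (Fintype.card F) j = t ^ j := by
  unfold reducedExponent
  split_ifs with hj
  · rw [hj]
  have hj' : j = (j - 1) % (Fintype.card F - 1) + 1 +
      (Fintype.card F - 1) * ((j - 1) / (Fintype.card F - 1)) := by
    have := Nat.mod_add_div (j - 1) (Fintype.card F - 1)
    omega
  rcases eq_or_ne t 0 with rfl | ht
  · rw [zero_pow (Nat.succ_ne_zero _), zero_pow hj]
  · conv_rhs => rw [hj', pow_add, pow_mul, FiniteField.pow_card_sub_one_eq_one t ht, one_pow,
      mul_one]

theorem Nat.Prime.exists_not_dvd_choose_lt_reducedExponent {σ : Type*} [Fintype σ] {p s d : ℕ}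
    (hp : p.Prime) (hd : d + p ^ (s - 1) + 1 ≤ p ^ s) (e : σ → ℕ) (he : ∀ i, e i < p ^ s)
    (hde : d < ∑ i, e i) :
    ∃ f : σ → ℕ, (∀ i, ¬ p ∣ (e i).choose (f i)) ∧ d < reducedExponent (p ^ s) (∑ i, f i) := by
  set q := p ^ s
  set k := (∑ i, e i - d - 1) / (q - 1)
  -- the window of length `p ^ (s - 1)` starting at `d + 1 + (q - 1) k` stays inside the block
  -- `((q - 1) k, (q - 1) (k + 1)]`, on which the reduced exponent is `j - (q - 1) k > d`
  have hk : (q - 1) * k ≤ ∑ i, e i - d - 1 := Nat.mul_div_le _ _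
  obtain ⟨f, hf, hlow, hhigh⟩ :=
    hp.exists_not_dvd_choose_sum_mem_Ico e he (n := d + 1 + (q - 1) * k) (by omega)
  refine ⟨f, hf, ?_⟩
  have hblock : (q - 1) * (k + 1) = (q - 1) * k + (q - 1) := Nat.mul_succ _ _
  rw [reducedExponent_eq_sub (k := k) (by omega) (by omega)]
  omega

open MvPolynomial Finset
open scoped Polynomial

section PairExponent

variable {σ : Type*} [Fintype σ]

noncomputable def pairExponent (a b : σ → ℕ) : σ ⊕ σ →₀ ℕ :=
  Finsupp.equivFunOnFinite.symm (Sum.elim a b)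

theorem pairExponent_inj {a b a' b' : σ → ℕ} :
    pairExponent a b = pairExponent a' b' ↔ a = a' ∧ b = b' := by
  rw [pairExponent, pairExponent, Equiv.apply_eq_iff_eq, Sum.elim_eq_iff]

theorem eval_monomial_pairExponent {R : Type*} [CommSemiring R] (x h : σ → R) (a b : σ → ℕ)
    (c : R) :
    eval (Sum.elim x h) (monomial (pairExponent a b) c) = c * ∏ i, x i ^ a i * h i ^ b i := by
  rw [eval_monomial, Finsupp.prod_fintype _ _ fun _ ↦ pow_zero _, Fintype.prod_sum_type,
    ← prod_mul_distrib]
  rfl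

end PairExponent

theorem Finset.prod_add_mul_pow {σ R : Type*} [Fintype σ] [DecidableEq σ] [CommSemiring R]
    (x h : σ → R) (t : R) (e : σ → ℕ) :
    ∏ i, (x i + t * h i) ^ e i = ∑ f ∈ Fintype.piFinset fun i ↦ range (e i + 1),
      (∏ i, (e i).choose (f i) * x i ^ (e i - f i) * h i ^ f i) * t ^ ∑ i, f i := by
  simp_rw [add_comm (x _), add_pow, prod_univ_sum, ← prod_pow_eq_pow_sum, ← prod_mul_distrib]
  exact sum_congr rfl fun f _ ↦ prod_congr rfl fun i _ ↦ by ring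

universe u

section ReducedLinePoly

variable {σ F : Type u} [Fintype σ] [DecidableEq σ] [Field F] [Fintype F]

/-- `G (x + t • h)` as a polynomial in `t` whose coefficients are polynomials in `(x, h)`, with
every power of `t` reduced by `t ^ q = t` to degree at most `q - 1`. -/
noncomputable def reducedLinePoly (G : MvPolynomial σ F) : (MvPolynomial (σ ⊕ σ) F)[X] :=
  ∑ e ∈ G.support, ∑ f ∈ Fintype.piFinset fun i ↦ range (e i + 1),
    Polynomial.monomial (reducedExponent (Fintype.card F) (∑ i, f i))
      (monomial (pairExponent (⇑e - f) f) (coeff e G * ∏ i, ((e i).choose (f i) : F)))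

theorem eval_map_reducedLinePoly (G : MvPolynomial σ F) (x h : σ → F) (t : F) :
    ((reducedLinePoly G).map (eval (Sum.elim x h))).eval t = eval (x + t • h) G := by
  conv_rhs => rw [G.as_sum, map_sum]
  simp only [reducedLinePoly, Polynomial.map_sum, Polynomial.map_monomial,
    Polynomial.eval_finsetSum, Polynomial.eval_monomial, eval_monomial_pairExponent,
    pow_reducedExponent]
  refine sum_congr rfl fun e _ ↦ ?_
  rw [eval_monomial, Finsupp.prod_fintype _ _ fun _ ↦ pow_zero _]
  simp only [Pi.add_apply, Pi.sub_apply, Pi.smul_apply, smul_eq_mul, prod_add_mul_pow, mul_sum,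
    prod_mul_distrib]
  exact sum_congr rfl fun f _ ↦ by ring

theorem natDegree_map_reducedLinePoly_le (G : MvPolynomial σ F)
    (φ : MvPolynomial (σ ⊕ σ) F →+* F) :
    ((reducedLinePoly G).map φ).natDegree ≤ Fintype.card F - 1 :=
  Polynomial.natDegree_map_le.trans <|
    Polynomial.natDegree_sum_le_of_forall_le _ _ fun _ _ ↦
      Polynomial.natDegree_sum_le_of_forall_le _ _ fun _ _ ↦
        (Polynomial.natDegree_monomial_le _).trans (reducedExponent_le Fintype.one_lt_card _)

theorem coeff_reducedLinePoly_mem_restrictDegree {G : MvPolynomial σ F} {n : ℕ}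
    (hG : G ∈ restrictDegree σ F n) (r : ℕ) :
    (reducedLinePoly G).coeff r ∈ restrictDegree (σ ⊕ σ) F n := by
  simp only [reducedLinePoly, Polynomial.finsetSum_coeff, Polynomial.coeff_monomial]
  refine Submodule.sum_mem _ fun e he ↦ Submodule.sum_mem _ fun f hf ↦ ?_
  split_ifs
  · rw [mem_restrictDegree]
    intro w hw
    have hfe : ∀ i, f i ≤ e i := fun i ↦ by
      simpa [Nat.lt_succ_iff] using Fintype.mem_piFinset.mp hf i
    have heG := (mem_restrictDegree _ _ _).mp hG e he
    rw [Finset.mem_singleton.mp (support_monomial_subset hw)]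
    rintro (i | i)
    · exact (Nat.sub_le _ _).trans (heG i)
    · exact (hfe i).trans (heG i)
  · exact Submodule.zero_mem _

theorem coeff_pairExponent_coeff_reducedLinePoly (G : MvPolynomial σ F) (e : σ →₀ ℕ) {f : σ → ℕ}
    (hfe : f ≤ ⇑e) :
    coeff (pairExponent (⇑e - f) f)
        ((reducedLinePoly G).coeff (reducedExponent (Fintype.card F) (∑ i, f i))) =
      coeff e G * ∏ i, ((e i).choose (f i) : F) := by
  have hunique : ∀ e' : σ →₀ ℕ, ∀ f' ∈ Fintype.piFinset fun i ↦ range (e' i + 1),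
      pairExponent (⇑e' - f') f' = pairExponent (⇑e - f) f → e' = e ∧ f' = f := by
    intro e' f' hf' heq
    obtain ⟨hsub, rfl⟩ := pairExponent_inj.mp heq
    refine ⟨Finsupp.ext fun i ↦ ?_, rfl⟩
    have h1 : e' i - f' i = e i - f' i := congrFun hsub i
    have h2 : f' i < e' i + 1 := mem_range.mp (Fintype.mem_piFinset.mp hf' i)
    have h3 : f' i ≤ e i := hfe i
    omega
  simp only [reducedLinePoly, Polynomial.finsetSum_coeff, Polynomial.coeff_monomial, coeff_sum,
    apply_ite (coeff _), coeff_zero, coeff_monomial]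
  have hf : f ∈ Fintype.piFinset fun i ↦ range (e i + 1) :=
    Fintype.mem_piFinset.mpr fun i ↦ mem_range.mpr (Nat.lt_succ_of_le (hfe i))
  rw [sum_eq_single e, sum_eq_single_of_mem f hf, if_pos rfl, if_pos rfl]
  · intro f' hf' hne
    split_ifs with _ heq
    exacts [absurd (hunique e f' hf' heq).2 hne, rfl, rfl]
  · intro e' _ hne
    refine sum_eq_zero fun f' hf' ↦ ?_
    split_ifs with _ heq
    exacts [absurd (hunique e' f' hf' heq).1 hne, rfl, rfl]
  · intro he
    simp [notMem_support_iff.mp he]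

theorem coeff_reducedLinePoly_eq_zero {d : ℕ} (hdq : d < Fintype.card F) {G : MvPolynomial σ F}
    (hG : G ∈ restrictDegree σ F (Fintype.card F - 1))
    (hline : ∀ x h : σ → F, ∃ P : F[X], P.natDegree ≤ d ∧ ∀ t, P.eval t = eval (x + t • h) G)
    {r : ℕ} (hr : d < r) : (reducedLinePoly G).coeff r = 0 := by
  refine eq_zero_of_eval_eq_zero _ _ _ (fun z ↦ ?_)
    (coeff_reducedLinePoly_mem_restrictDegree hG r)
  obtain ⟨P, hPd, hP⟩ := hline (z ∘ Sum.inl) (z ∘ Sum.inr)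
  have hmap : (reducedLinePoly G).map (eval (Sum.elim (z ∘ Sum.inl) (z ∘ Sum.inr))) = P :=
    Polynomial.eq_of_natDegree_lt_card_of_eval_eq _ _ Function.injective_id
      (fun t ↦ (eval_map_reducedLinePoly G _ _ t).trans (hP t).symm)
      (max_lt ((natDegree_map_reducedLinePoly_le G _).trans_lt
        (Nat.sub_lt Fintype.card_pos one_pos)) (hPd.trans_lt hdq))
  rw [← Sum.elim_comp_inl_inr z, ← Polynomial.coeff_map, hmap]
  exact Polynomial.coeff_eq_zero_of_natDegree_lt (hPd.trans_lt hr)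

theorem totalDegree_le_of_natDegree_line_le {d : ℕ}
    (hq : d + Fintype.card F / ringChar F + 1 ≤ Fintype.card F) {G : MvPolynomial σ F}
    (hG : G ∈ restrictDegree σ F (Fintype.card F - 1))
    (hline : ∀ x h : σ → F, ∃ P : F[X], P.natDegree ≤ d ∧ ∀ t, P.eval t = eval (x + t • h) G) :
    G.totalDegree ≤ d := by
  set p := ringChar F
  obtain ⟨s, hp, hcard⟩ := FiniteField.card F p
  have hps : p ^ (s : ℕ) / p = p ^ ((s : ℕ) - 1) := by
    simpa using Nat.pow_div (x := p) s.pos hp.pos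
  rw [hcard, hps] at hq
  refine Finset.sup_le fun e he ↦ ?_
  rw [Finsupp.sum_fintype _ _ fun _ ↦ rfl]
  by_contra! hde
  have he_lt : ∀ i, e i < p ^ (s : ℕ) := fun i ↦ by
    have := (mem_restrictDegree _ _ _).mp hG e he i
    have := pow_pos hp.pos s
    omega
  obtain ⟨f, hf, hdf⟩ := hp.exists_not_dvd_choose_lt_reducedExponent hq e he_lt hde
  have hfe : f ≤ ⇑e := fun i ↦ Nat.le_of_not_dvd_choose (hf i)
  have hzero := coeff_pairExponent_coeff_reducedLinePoly G e hfe
  rw [coeff_reducedLinePoly_eq_zero (by omega) hG hline (hcard ▸ hdf), coeff_zero,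
    eq_comm] at hzero
  refine mul_ne_zero (mem_support_iff.mp he) (prod_ne_zero_iff.mpr fun i _ ↦ ?_) hzero
  rw [Ne, CharP.cast_eq_zero_iff F p]
  exact hf i

end ReducedLinePoly

theorem total_degree_characterization_general
    (F : Type) [Field F] [Fintype F]
    (m d : ℕ)
    (hq : d + Fintype.card F / ringChar F + 1 ≤ Fintype.card F)
    (g : (Fin m → F) → F)
    (hline : ∀ x h : Fin m → F, ∃ P : Polynomial F, P.natDegree ≤ d ∧
      ∀ t : F, P.eval t = g (x + t • h)) :
    ∃ P : MvPolynomial (Fin m) F, P.totalDegree ≤ d ∧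
      ∀ y : Fin m → F, MvPolynomial.eval y P = g y := by
  have hg : g ∈ (restrictDegree (Fin m) F (Fintype.card F - 1)).map (evalₗ F (Fin m)) := by
    rw [map_restrict_dom_evalₗ]
    exact Submodule.mem_top
  obtain ⟨G, hG, hGg⟩ := Submodule.mem_map.mp hg
  have hGg' : ∀ y, eval y G = g y := congrFun hGg
  refine ⟨G, totalDegree_le_of_natDegree_line_le hq hG fun x h ↦ ?_, hGg'⟩
  simpa only [hGg'] using hline x h

/-- If `F` is a finite field of order `q` and characteristic `p` with
`q - q/p - 1 ≥ d` (stated additively to avoid natural subtraction), and every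
restriction of `g : F^m → F` to a line agrees everywhere with a univariate
polynomial of degree at most `d`, then `g` is the evaluation of an `m`-variate
polynomial of total degree at most `d`. -/
theorem total_degree_characterization
    (F : Type) [Field F] [Fintype F]
    (m d : ℕ) (hm : 1 ≤ m)
    (hq : d + Fintype.card F / ringChar F + 1 ≤ Fintype.card F)
    (g : (Fin m → F) → F)
    (hline : ∀ x h : Fin m → F, ∃ P : Polynomial F, P.natDegree ≤ d ∧
      ∀ t : F, P.eval t = g (x + t • h)) :
    ∃ P : MvPolynomial (Fin m) F, P.totalDegree ≤ d ∧
      ∀ y : Fin m → F, MvPolynomial.eval y P = g y :=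
  total_degree_characterization_general F m d hq g hline
end

section
/- Let F be a finite field of order q = p^s with characteristic p and s ≥ 1, and let d be an integer with q - q/p - 1 < d < q. Define g : F^2 → F by g(x_1, x_2) = (x_1^{p-1} · x_2)^{q/p}. Then for every x, h ∈ F^2 there exists a univariate polynomial P over F of degree at most d such that P(t) = g(x + t·h) for every t ∈ F; yet g is not the evaluation of any bivariate polynomial over F of total degree at most d. -/
/-!
Put `m = q/p`. On the line through `x` in direction `h`, `g(x + t•h) = Q(t)^m` with
`Q(t) = (x₀ + t h₀)^(p-1) (x₁ + t h₁)` of degree at most `p`. As `m` is a power of `p`, Frobenius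
gives `Q(t)^m = Σₖ cₖ^m t^(km)`; every exponent is at most `(p-1)m = q - m ≤ d` except `pm = q`,
and `t^q = t` on `F`.

On the other hand `g` is the monomial `x₀^(q-m) x₁^m` of total degree `q`, whose individual degrees
are below `q`. Polynomials whose individual degrees are below `q` are determined by their values
on `F²`, and a polynomial of total degree at most `d < q` is one of them; so one agreeing with `g`
would be that monomial, of total degree `q > d`.
-/

open Polynomial

theorem Polynomial.natDegree_erase_le_pred {R : Type*} [Semiring R] (f : R[X]) {n : ℕ}
    (hf : f.natDegree ≤ n) : (f.erase n).natDegree ≤ n - 1 := by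
  refine natDegree_le_iff_coeff_eq_zero.mpr fun i hi => ?_
  rw [coeff_erase]
  split_ifs with hin
  · rfl
  · exact coeff_eq_zero_of_natDegree_lt (by omega)

section FiniteField

variable {F : Type*} [Field F] [Fintype F]

theorem Polynomial.exists_natDegree_le_eval_eq_eval_pow (R : F[X]) {n m : ℕ}
    (hR : R.natDegree ≤ n) (hnm : n * m = Fintype.card F) :
    ∃ P : F[X], P.natDegree ≤ max ((n - 1) * m) 1 ∧ ∀ t, P.eval t = R.eval (t ^ m) := by
  refine ⟨expand F m (R.erase n) + C (R.coeff n) * X, ?_, fun t => ?_⟩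
  · refine (natDegree_add_le _ _).trans <|
      max_le_max ?_ ((natDegree_C_mul_le _ _).trans natDegree_X_le)
    rw [natDegree_expand]
    exact Nat.mul_le_mul_right m (R.natDegree_erase_le_pred hR)
  · conv_rhs => rw [← monomial_add_erase R n]
    rw [eval_add, eval_add, expand_eval, eval_monomial, eval_C_mul, eval_X, ← pow_mul, mul_comm m,
      hnm, FiniteField.pow_card, add_comm]

theorem Polynomial.exists_natDegree_le_eval_eq_eval_pow_char_pow {p : ℕ} [CharP F p] (Q : F[X])
    {n k : ℕ} (hQ : Q.natDegree ≤ n) (hnk : n * p ^ k = Fintype.card F) :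
    ∃ P : F[X], P.natDegree ≤ max ((n - 1) * p ^ k) 1 ∧ ∀ t, P.eval t = Q.eval t ^ p ^ k := by
  have : Fact p.Prime := ⟨CharP.char_is_prime F p⟩
  obtain ⟨P, hPdeg, hP⟩ := (Q.map (iterateFrobenius F p k)).exists_natDegree_le_eval_eq_eval_pow
    ((natDegree_map_le).trans hQ) hnk
  refine ⟨P, hPdeg, fun t => ?_⟩
  rw [hP, ← iterateFrobenius_def, eval_map_apply, iterateFrobenius_def]

theorem exists_natDegree_le_eval_eq_on_line {p k : ℕ} [CharP F p]
    (hcard : Fintype.card F = p * p ^ k) (x h : Fin 2 → F) :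
    ∃ P : F[X], P.natDegree ≤ max ((p - 1) * p ^ k) 1 ∧
      ∀ t, P.eval t = ((x + t • h) 0 ^ (p - 1) * (x + t • h) 1) ^ p ^ k := by
  have hp : 0 < p := (CharP.char_is_prime F p).pos
  have hdeg : ((C (h 0) * X + C (x 0)) ^ (p - 1) * (C (h 1) * X + C (x 1))).natDegree ≤ p := by
    refine natDegree_mul_le.trans ?_
    have := natDegree_pow_le_of_le (p - 1) (natDegree_linear_le (a := h 0) (b := x 0))
    have := natDegree_linear_le (a := h 1) (b := x 1)
    omega
  obtain ⟨P, hPdeg, hP⟩ := exists_natDegree_le_eval_eq_eval_pow_char_pow _ hdeg hcard.symm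
  refine ⟨P, hPdeg, fun t => ?_⟩
  rw [hP]
  simp only [eval_mul, eval_pow, eval_add, eval_C, eval_X, Pi.add_apply, Pi.smul_apply,
    smul_eq_mul]
  ring

end FiniteField

namespace MvPolynomial

theorem monomial_mem_restrictDegree {σ R : Type*} [CommSemiring R] {s : σ →₀ ℕ} {n : ℕ}
    (hs : ∀ i, s i ≤ n) (c : R) : monomial s c ∈ restrictDegree σ R n :=
  (mem_restrictDegree _ _ _).mpr fun t ht i => by
    rw [Finset.mem_singleton.mp (support_monomial_subset ht)]
    exact hs i

universe u

variable {σ F : Type u} [Field F] [Fintype F]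

theorem eq_of_eval_eq_of_mem_restrictDegree [Finite σ] {P Q : MvPolynomial σ F}
    (hP : P ∈ restrictDegree σ F (Fintype.card F - 1))
    (hQ : Q ∈ restrictDegree σ F (Fintype.card F - 1)) (h : ∀ v, eval v P = eval v Q) : P = Q :=
  sub_eq_zero.mp <| eq_zero_of_eval_eq_zero σ F (P - Q) (fun v => by rw [map_sub, h, sub_self])
    (sub_mem hP hQ)

theorem eq_monomial_of_eval_eq [Finite σ] {s : σ →₀ ℕ} (hs : ∀ i, s i < Fintype.card F)
    {P : MvPolynomial σ F} (hPdeg : P.totalDegree < Fintype.card F)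
    (hP : ∀ y, eval y P = s.prod fun i e => y i ^ e) : P = monomial s 1 := by
  refine eq_of_eval_eq_of_mem_restrictDegree ?_
    (monomial_mem_restrictDegree (fun i => Nat.le_sub_one_of_lt (hs i)) _)
    fun y => by rw [hP, eval_monomial, one_mul]
  exact restrictTotalDegree_le_restrictDegree _ _ _
    ((mem_restrictTotalDegree _ _ _).mpr (Nat.le_sub_one_of_lt hPdeg))

end MvPolynomial

/-- Tightness of the characterization. For a finite field `F` of order
`q = p^s` and any `d` with `q - q/p - 1 < d < q`, the function
`g(x₁,x₂) = (x₁^(p-1) · x₂)^(q/p)` agrees on every line with a univariate polynomial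
of degree at most `d`, yet `g` is not the evaluation of any bivariate polynomial of
total degree at most `d`. -/
theorem total_degree_characterization_tight
    (F : Type) [Field F] [Fintype F]
    (p s : ℕ) (hp : p.Prime) (hs : 1 ≤ s)
    (hcard : Fintype.card F = p ^ s) (hchar : ringChar F = p)
    (d : ℕ) (hd1 : p ^ s - p ^ s / p - 1 < d) (hd2 : d < p ^ s)
    (g : (Fin 2 → F) → F)
    (hg : ∀ y : Fin 2 → F, g y = (y 0 ^ (p - 1) * y 1) ^ (p ^ s / p)) :
    (∀ x h : Fin 2 → F, ∃ P : Polynomial F, P.natDegree ≤ d ∧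
      ∀ t : F, P.eval t = g (x + t • h)) ∧
    ¬ ∃ P : MvPolynomial (Fin 2) F, P.totalDegree ≤ d ∧
      ∀ y : Fin 2 → F, MvPolynomial.eval y P = g y := by
  have : CharP F p := hchar ▸ ringChar.charP F
  obtain ⟨k, rfl⟩ : ∃ k, s = k + 1 := ⟨s - 1, by omega⟩
  have hq : p ^ (k + 1) = p * p ^ k := pow_succ' p k
  rw [hq, Nat.mul_div_cancel_left _ hp.pos] at hd1 hg
  rw [hq] at hcard hd2
  have hpk : 0 < p ^ k := pow_pos hp.pos k
  have hp1 : (p - 1) * p ^ k = p * p ^ k - p ^ k := Nat.sub_one_mul p (p ^ k)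
  have hlt : p ^ k < p * p ^ k := lt_mul_left hpk hp.one_lt
  refine ⟨fun x h => ?_, ?_⟩
  · obtain ⟨P, hPdeg, hP⟩ := exists_natDegree_le_eval_eq_on_line hcard x h
    exact ⟨P, hPdeg.trans (max_le (by omega) (by omega)), fun t => by rw [hP, hg]⟩
  · rintro ⟨P, hPdeg, hPg⟩
    let e : Fin 2 →₀ ℕ := Finsupp.single 0 ((p - 1) * p ^ k) + Finsupp.single 1 (p ^ k)
    have he : e.sum (fun _ n => n) = p * p ^ k := by
      rw [Finsupp.sum_add_index' (fun _ => rfl) (fun _ _ _ => rfl), Finsupp.sum_single_index rfl,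
        Finsupp.sum_single_index rfl]
      omega
    have hPe : P = MvPolynomial.monomial e 1 := by
      refine MvPolynomial.eq_monomial_of_eval_eq (fun i => ?_) (by omega) fun y => ?_
      · fin_cases i <;> simp [e] <;> omega
      · simp [e, hPg, hg, mul_pow, pow_mul]
    rw [hPe, MvPolynomial.totalDegree_monomial _ one_ne_zero, he] at hPdeg
    omega
end

section
/- Let p be a prime, s ≥ 1 an integer, and let n, r be integers with 0 < r ≤ n ≤ p^s - 1. If p^{s-1} divides r, then p does not divide the binomial coefficient C(n, r). -/
/-!
By Kummer's theorem, the exponent of `p` in `C(n, r)` is the number of carries when adding `r`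
and `n - r` in base `p`. Since `n < p ^ s`, only the lowest `s - 1` digit positions can carry,
and there the digits of `r` vanish because `p ^ (s - 1) ∣ r`; so there are no carries.
-/

open Finset

namespace Nat.Prime

variable {p n k : ℕ}

theorem not_dvd_choose_of_forall_mod_add_mod_lt {b : ℕ} (hp : p.Prime) (hkn : k ≤ n)
    (hnb : log p n < b) (hcarry : ∀ i ∈ Ico 1 b, k % p ^ i + (n - k) % p ^ i < p ^ i) :
    ¬ p ∣ n.choose k := by
  rw [← emultiplicity_eq_zero, hp.emultiplicity_choose hkn hnb, Nat.cast_eq_zero,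
    Finset.card_eq_zero, filter_eq_empty_iff]
  exact fun i hi => not_le.mpr (hcarry i hi)

theorem not_dvd_choose_of_pow_dvd {s : ℕ} (hp : p.Prime) (hkn : k ≤ n) (hn : n < p ^ (s + 1))
    (hk : p ^ s ∣ k) : ¬ p ∣ n.choose k := by
  refine hp.not_dvd_choose_of_forall_mod_add_mod_lt hkn (log_lt_of_lt_pow' s.succ_ne_zero hn)
    fun i hi => ?_
  have hik : p ^ i ∣ k := (pow_dvd_pow p (Nat.le_of_lt_succ (mem_Ico.mp hi).2)).trans hk
  rw [Nat.mod_eq_zero_of_dvd hik, zero_add]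
  exact Nat.mod_lt _ (pow_pos hp.pos i)

end Nat.Prime

theorem binom_not_div_general
    (p s n r : ℕ) (hp : p.Prime)
    (hrn : r ≤ n) (hn : n ≤ p ^ s - 1)
    (hdvd : p ^ (s - 1) ∣ r) :
    ¬ p ∣ n.choose r := by
  have hns : n < p ^ (s - 1 + 1) :=
    calc n < p ^ s := by have := pow_pos hp.pos s; omega
      _ ≤ p ^ (s - 1 + 1) := Nat.pow_le_pow_right hp.pos (by omega)
  exact hp.not_dvd_choose_of_pow_dvd hrn hns hdvd

/-- Let `p` be a prime, `s ≥ 1`, and `0 < r ≤ n ≤ p^s - 1`.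
If `p^(s-1)` divides `r`, then `p` does not divide `C(n, r)`. -/
theorem binom_not_div
    (p s n r : ℕ) (hp : p.Prime) (hs : 1 ≤ s)
    (hr0 : 0 < r) (hrn : r ≤ n) (hn : n ≤ p ^ s - 1)
    (hdvd : p ^ (s - 1) ∣ r) :
    ¬ p ∣ n.choose r :=
  binom_not_div_general p s n r hp hrn hn hdvd
end

section
/- Let F be a finite field, m ≥ 1, d ≥ 0, and f : F^m → F. Let Q be any degree-d line polynomial family for f, let δ_f(Q) = Pr_{x,h}[f(x) ≠ Q_{x,h}(0)], and let Corr be any correction function for (f, Q). Then d(f, Corr) ≤ 2·δ_f(Q). -/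
/-- `Q` is a degree-`d` line polynomial family for `f`: each `Q x h` is a univariate
polynomial of degree at most `d` that maximizes, among all univariate polynomials of
degree at most `d`, the number of `t ∈ F` with `Q x h (t) = f (x + t • h)`. -/
def IsLinePolyFamily (F : Type) [Field F] [Fintype F] [DecidableEq F]
    (m d : ℕ) (f : (Fin m → F) → F)
    (Q : (Fin m → F) → (Fin m → F) → Polynomial F) : Prop :=
  ∀ x h : Fin m → F, (Q x h).natDegree ≤ d ∧
    ∀ R : Polynomial F, R.natDegree ≤ d →
      (Finset.univ.filter fun t : F => R.eval t = f (x + t • h)).card ≤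
      (Finset.univ.filter fun t : F => (Q x h).eval t = f (x + t • h)).card

/-- `Corr` is a correction function for `(f, Q)`: for each `x`, `Corr x` is a
plurality value of `{Q x h (0) : h ∈ F^m}`. -/
def IsCorrection (F : Type) [Field F] [Fintype F] [DecidableEq F]
    (m : ℕ) (Q : (Fin m → F) → (Fin m → F) → Polynomial F)
    (Corr : (Fin m → F) → F) : Prop :=
  ∀ (x : Fin m → F) (a : F),
    (Finset.univ.filter fun h : Fin m → F => (Q x h).eval 0 = a).card ≤
    (Finset.univ.filter fun h : Fin m → F => (Q x h).eval 0 = Corr x).card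

/-- `δ_f(Q)`: the fraction of pairs `(x,h) ∈ F^m × F^m` with `f x ≠ Q x h (0)`. -/
noncomputable def lineDelta (F : Type) [Field F] [Fintype F] [DecidableEq F]
    (m : ℕ) (f : (Fin m → F) → F)
    (Q : (Fin m → F) → (Fin m → F) → Polynomial F) : ℝ :=
  ((Finset.univ.filter fun z : (Fin m → F) × (Fin m → F) =>
      f z.1 ≠ (Q z.1 z.2).eval 0).card : ℝ) / (Fintype.card F : ℝ) ^ (2 * m)

/-- `d(f,g)`: the fraction of points `x ∈ F^m` with `f x ≠ g x`. -/
noncomputable def fdist (F : Type) [Field F] [Fintype F] [DecidableEq F]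
    (m : ℕ) (f g : (Fin m → F) → F) : ℝ :=
  ((Finset.univ.filter fun x : Fin m → F => f x ≠ g x).card : ℝ) /
    (Fintype.card F : ℝ) ^ m

/-!
If `f x ≠ Corr x`, then every `h` with `Q x h (0) = Corr x` disagrees with `f x`, and since
`Corr x` is a plurality value there are at least as many such `h` as there are `h` with
`Q x h (0) = f x`. Hence at least half of all directions `h` witness `f x ≠ Q x h (0)`, and
summing over the points `x` where `f` and `Corr` differ gives `d(f, Corr) ≤ 2 δ_f(Q)`.
-/

open Finset

theorem card_le_two_mul_card_ne_of_plurality {ι α : Type*} [Fintype ι] [DecidableEq α]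
    (g : ι → α) {a c : α} (hc : #{i | g i = a} ≤ #{i | g i = c}) (hac : a ≠ c) :
    Fintype.card ι ≤ 2 * #{i | a ≠ g i} := by
  have hsplit : #{i | g i = a} + #{i | a ≠ g i} = Fintype.card ι := by
    simpa only [eq_comm, card_univ] using
      card_filter_add_card_filter_not (s := univ) (fun i => g i = a)
  have hsub : #{i | g i = c} ≤ #{i | a ≠ g i} :=
    card_le_card fun i hi => by
      simp only [mem_filter, mem_univ, true_and] at hi ⊢
      exact hi ▸ hac
  omega

theorem card_mul_card_le_of_forall_le_card_fiber {X H : Type*} [Fintype X] [Fintype H]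
    (P : X → H → Prop) [∀ x h, Decidable (P x h)] (s : Finset X) (k : ℕ)
    (hs : ∀ x ∈ s, Fintype.card H ≤ k * #{h | P x h}) :
    #s * Fintype.card H ≤ k * #{z : X × H | P z.1 z.2} := by
  have hfibers : #{z : X × H | P z.1 z.2} = ∑ x, #{h | P x h} := by
    simp only [card_filter, Fintype.sum_prod_type]
  calc #s * Fintype.card H = ∑ _x ∈ s, Fintype.card H := by rw [sum_const, smul_eq_mul]
    _ ≤ ∑ x ∈ s, k * #{h | P x h} := sum_le_sum hs
    _ ≤ ∑ x, k * #{h | P x h} := sum_le_sum_of_subset (subset_univ s)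
    _ = k * #{z : X × H | P z.1 z.2} := by rw [hfibers, mul_sum]

theorem dist_self_corr_le_general
    (F : Type) [Field F] [Fintype F] [DecidableEq F]
    (m : ℕ)
    (f : (Fin m → F) → F)
    (Q : (Fin m → F) → (Fin m → F) → Polynomial F)
    (Corr : (Fin m → F) → F)
    (hCorr : IsCorrection F m Q Corr) :
    fdist F m f Corr ≤ 2 * lineDelta F m f Q := by
  have hcount := card_mul_card_le_of_forall_le_card_fiber
    (fun x h => f x ≠ (Q x h).eval 0) {x | f x ≠ Corr x} 2 fun x hx =>
      card_le_two_mul_card_ne_of_plurality (fun h => (Q x h).eval 0) (hCorr x (f x))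
        (mem_filter.1 hx).2
  rw [Fintype.card_fun, Fintype.card_fin] at hcount
  have hq : (0 : ℝ) < Fintype.card F := by exact_mod_cast Fintype.card_pos
  rw [fdist, lineDelta, mul_div_assoc', div_le_div_iff₀ (by positivity) (by positivity),
    two_mul m, pow_add, ← mul_assoc]
  exact mul_le_mul_of_nonneg_right (by exact_mod_cast hcount) (by positivity)

/-- For any degree-`d` line polynomial family `Q` for `f` and any
correction function `Corr` for `(f, Q)`, we have `d(f, Corr) ≤ 2·δ_f(Q)`. -/
theorem dist_self_corr_le
    (F : Type) [Field F] [Fintype F] [DecidableEq F]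
    (m d : ℕ) (hm : 1 ≤ m)
    (f : (Fin m → F) → F)
    (Q : (Fin m → F) → (Fin m → F) → Polynomial F)
    (hQ : IsLinePolyFamily F m d f Q)
    (Corr : (Fin m → F) → F)
    (hCorr : IsCorrection F m Q Corr) :
    fdist F m f Corr ≤ 2 * lineDelta F m f Q :=
  dist_self_corr_le_general F m f Q Corr hCorr
end

section
/- There exists a constant c such that the following holds. Let F be a finite field, m ≥ 1, d ≥ 0, β > 0, and suppose |F| ≥ c·(d+1)/β. Let g : F^m → F be the evaluation of a polynomial of total degree at most d, let f : F^m → F satisfy d(f, g) < 1/4 - β, let Q be any degree-d line polynomial family for f, and let Corr be any correction function for (f, Q). Then Corr(x) = g(x) for every x ∈ F^m. -/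
open Finset Polynomial

theorem MvPolynomial.natDegree_aeval_le {σ R : Type*} [CommSemiring R] (p : MvPolynomial σ R)
    (φ : σ → R[X]) {k : ℕ} (hφ : ∀ i, (φ i).natDegree ≤ k) :
    (MvPolynomial.aeval φ p).natDegree ≤ p.totalDegree * k := by
  rw [MvPolynomial.aeval_def, MvPolynomial.eval₂_eq]
  refine natDegree_sum_le_of_forall_le _ _ fun s hs => ?_
  calc _ ≤ (∏ i ∈ s.support, φ i ^ s i).natDegree := by
        rw [Polynomial.algebraMap_eq]; exact natDegree_C_mul_le _ _
    _ ≤ ∑ i ∈ s.support, s i * k :=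
        (natDegree_prod_le _ _).trans (sum_le_sum fun i _ => natDegree_pow_le_of_le _ (hφ i))
    _ ≤ p.totalDegree * k := by
        rw [← sum_mul]
        exact Nat.mul_le_mul_right _ (MvPolynomial.le_totalDegree hs)

theorem MvPolynomial.exists_natDegree_le_eval_line {σ K : Type*} [CommRing K] {d : ℕ}
    (P : MvPolynomial σ K) (hP : P.totalDegree ≤ d) (x h : σ → K) :
    ∃ q : K[X], q.natDegree ≤ d ∧ ∀ t, q.eval t = MvPolynomial.eval (x + t • h) P := by
  refine ⟨MvPolynomial.aeval (fun i => Polynomial.C (h i) * Polynomial.X + Polynomial.C (x i)) P,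
    ?_, fun t => ?_⟩
  · exact (P.natDegree_aeval_le _ fun _ => natDegree_linear_le).trans (by simpa using hP)
  · rw [MvPolynomial.aeval_def, MvPolynomial.polynomial_eval_eval₂, MvPolynomial.eval]
    congr 1
    · ext; simp
    · funext i
      simp only [Polynomial.eval_add, Polynomial.eval_mul, Polynomial.eval_C, Polynomial.eval_X,
        Pi.add_apply, Pi.smul_apply, smul_eq_mul]
      ring

theorem Polynomial.card_filter_eval_eq_le {F : Type*} [Field F] [Fintype F] [DecidableEq F] {d : ℕ}
    {P R : F[X]} (hP : P.natDegree ≤ d) (hR : R.natDegree ≤ d) (hne : P ≠ R) :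
    #{t | P.eval t = R.eval t} ≤ d := by
  by_contra! hlt
  have hdeg {S : F[X]} (hS : S.natDegree ≤ d) : S.degree < #{t | P.eval t = R.eval t} :=
    (degree_le_of_natDegree_le hS).trans_lt (Nat.cast_lt.2 hlt)
  exact hne <| eq_of_degrees_lt_of_eval_finset_eq _ (hdeg hP) (hdeg hR)
    fun t ht => (mem_filter.1 ht).2

theorem Polynomial.eq_of_card_agree_le_of_add_two_mul_card_ne_lt {F : Type*} [Field F] [Fintype F]
    [DecidableEq F] {d : ℕ} {Q R : F[X]} {u : F → F} (hQ : Q.natDegree ≤ d) (hR : R.natDegree ≤ d)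
    (hmax : #{t | R.eval t = u t} ≤ #{t | Q.eval t = u t})
    (hfar : d + 2 * #{t | R.eval t ≠ u t} < Fintype.card F) : Q = R := by
  by_contra hQR
  have hR_split : #{t | R.eval t = u t} + #{t | R.eval t ≠ u t} = Fintype.card F :=
    card_filter_add_card_filter_not _
  have hQ_agree : #{t | Q.eval t = u t} ≤ #{t | Q.eval t = R.eval t} + #{t | R.eval t ≠ u t} := by
    refine (card_le_card fun t ht => ?_).trans (card_union_le _ _)
    by_cases hRt : R.eval t = u t <;> simp_all
  have := card_filter_eval_eq_le hQ hR hQR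
  omega

variable {F V : Type*} [Field F] [AddCommGroup V] [Module F V] [Fintype V]

theorem card_filter_line_eq (p : V → Prop) [DecidablePred p] (x : V) {t : F} (ht : t ≠ 0) :
    #{h | p (x + t • h)} = #{y | p y} :=
  card_equiv ((LinearEquiv.smulOfNeZero F V t ht).toEquiv.trans (Equiv.addLeft x))
    fun h => by simp

theorem sum_card_filter_line_le [Fintype F] [DecidableEq F] (p : V → Prop) [DecidablePred p]
    (x : V) :
    ∑ h : V, #{t : F | p (x + t • h)} ≤ (Fintype.card F - 1) * #{y | p y} + Fintype.card V := by
  have hsplit (h : V) :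
      #{t : F | p (x + t • h)} ≤ #{t ∈ univ.erase (0 : F) | p (x + t • h)} + 1 := by
    refine (card_le_card fun t ht => ?_).trans (card_insert_le 0 _)
    rcases eq_or_ne t 0 with rfl | ht0 <;> simp_all
  calc ∑ h : V, #{t : F | p (x + t • h)}
      ≤ ∑ h : V, (#{t ∈ univ.erase (0 : F) | p (x + t • h)} + 1) := sum_le_sum fun h _ => hsplit h
    _ = ∑ t ∈ univ.erase (0 : F), #{h : V | p (x + t • h)} + Fintype.card V := by
        rw [sum_add_distrib, sum_const, card_univ, smul_eq_mul, mul_one]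
        congr 1
        exact sum_card_bipartiteAbove_eq_sum_card_bipartiteBelow _
    _ = (Fintype.card F - 1) * #{y | p y} + Fintype.card V := by
        rw [sum_congr rfl fun t ht => card_filter_line_eq p x (ne_of_mem_erase ht), sum_const,
          card_erase_of_mem (mem_univ _), card_univ, smul_eq_mul]

theorem card_filter_ne_mul_sub_le [Fintype F] [DecidableEq F] {d : ℕ} (f g : V → F) (x : V)
    {Q R : V → F[X]} (hQ : ∀ h, (Q h).natDegree ≤ d) (hR : ∀ h, (R h).natDegree ≤ d)
    (hRg : ∀ h t, (R h).eval t = g (x + t • h))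
    (hmax : ∀ h, #{t | (R h).eval t = f (x + t • h)} ≤ #{t | (Q h).eval t = f (x + t • h)}) :
    #{h | Q h ≠ R h} * (Fintype.card F - d) ≤
      2 * ((Fintype.card F - 1) * #{y | f y ≠ g y} + Fintype.card V) := by
  have hline (h : V) (hh : h ∈ ({h | Q h ≠ R h} : Finset V)) :
      Fintype.card F - d ≤ 2 * #{t : F | f (x + t • h) ≠ g (x + t • h)} := by
    by_contra! hlt
    refine (mem_filter.1 hh).2 (eq_of_card_agree_le_of_add_two_mul_card_ne_lt (hQ h) (hR h)
      (hmax h) ?_)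
    simp only [hRg, ne_comm (a := g _)]
    omega
  calc #{h | Q h ≠ R h} * (Fintype.card F - d)
      ≤ ∑ h ∈ {h | Q h ≠ R h}, 2 * #{t : F | f (x + t • h) ≠ g (x + t • h)} :=
        card_nsmul_le_sum _ _ _ hline
    _ ≤ ∑ h, 2 * #{t : F | f (x + t • h) ≠ g (x + t • h)} :=
        sum_le_sum_of_subset (subset_univ _)
    _ ≤ 2 * ((Fintype.card F - 1) * #{y | f y ≠ g y} + Fintype.card V) := by
        rw [← mul_sum]
        exact Nat.mul_le_mul_left 2 (sum_card_filter_line_le (fun y => f y ≠ g y) x)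

theorem two_mul_lt_of_mul_sub_le {q d D N B : ℕ} {β : ℝ} (hq : 3 * ((d : ℝ) + 1) ≤ β * q)
    (hD : (D : ℝ) < (1 / 4 - β) * N) (hB : B * (q - d) ≤ 2 * ((q - 1) * D + N)) : 2 * B < N := by
  have hβ : 0 < β := by nlinarith [q.cast_nonneg (α := ℝ), d.cast_nonneg (α := ℝ)]
  have hdq : d < q := by
    have : (d : ℝ) < q := by nlinarith [D.cast_nonneg (α := ℝ)]
    exact_mod_cast this
  have hB' : (B : ℝ) * (q - d) ≤ 2 * ((q - 1) * D + N) := by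
    have := (Nat.cast_le (α := ℝ)).2 hB
    push_cast [Nat.cast_sub hdq.le, Nat.cast_sub (hdq.trans_le' d.zero_le)] at this
    exact this
  have hd3 : (d : ℝ) + 3 < 4 * β * (q - 1) := by nlinarith
  have : 2 * (B : ℝ) * (q - d) < N * (q - d) := by nlinarith
  have : 2 * (B : ℝ) < N := lt_of_mul_lt_mul_right this (by linarith [(Nat.cast_lt (α := ℝ)).2 hdq])
  exact_mod_cast this

theorem eq_of_card_fiber_le_of_lt_two_mul {α β : Type*} [Fintype α] [DecidableEq β] (φ : α → β)
    {a b : β} (hab : #{i | φ i = a} ≤ #{i | φ i = b}) (ha : Fintype.card α < 2 * #{i | φ i = a}) :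
    b = a := by
  classical
  by_contra hba
  have hdisj : Disjoint (α := Finset α) {i | φ i = a} {i | φ i = b} :=
    disjoint_filter.2 fun i _ hia hib => hba (hib ▸ hia)
  have := (card_union_of_disjoint hdisj).symm.trans_le (card_le_univ _)
  omega

/-- There is a constant `c > 0` such that whenever `|F| ≥ c·(d+1)/β`,
`g : F^m → F` is the evaluation of a polynomial of total degree at most `d`,
`f` satisfies `d(f,g) < 1/4 - β`, `Q` is a degree-`d` line polynomial family for `f`,
and `Corr` is a correction function for `(f,Q)`, then `Corr = g` everywhere. -/
theorem corr_eq_poly_of_close :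
    ∃ c : ℝ, 0 < c ∧
    ∀ (F : Type) [Field F] [Fintype F] [DecidableEq F] (m d : ℕ) (β : ℝ),
      1 ≤ m → 0 < β → c * ((d : ℝ) + 1) / β ≤ (Fintype.card F : ℝ) →
      ∀ (g f : (Fin m → F) → F),
        (∃ Pg : MvPolynomial (Fin m) F, Pg.totalDegree ≤ d ∧
          ∀ y : Fin m → F, MvPolynomial.eval y Pg = g y) →
        fdist F m f g < 1 / 4 - β →
      ∀ (Q : (Fin m → F) → (Fin m → F) → Polynomial F),
        IsLinePolyFamily F m d f Q →
      ∀ (Corr : (Fin m → F) → F),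
        IsCorrection F m Q Corr →
      ∀ x : Fin m → F, Corr x = g x := by
  refine ⟨3, by norm_num, ?_⟩
  intro F _ _ _ m d β _ hβ hcard g f ⟨P, hPdeg, hPg⟩ hdist Q hQ Corr hCorr x
  choose R hRdeg hReval using P.exists_natDegree_le_eval_line hPdeg x
  have hRg (h : Fin m → F) (t : F) : (R h).eval t = g (x + t • h) := (hReval h t).trans (hPg _)
  have hcardV : Fintype.card (Fin m → F) = Fintype.card F ^ m := by simp
  have hbad := card_filter_ne_mul_sub_le f g x (fun h => (hQ x h).1) hRdeg hRg
    fun h => (hQ x h).2 _ (hRdeg h)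
  rw [hcardV] at hbad
  have h2bad : 2 * #{h | Q x h ≠ R h} < Fintype.card F ^ m := by
    refine two_mul_lt_of_mul_sub_le (β := β) ?_ ?_ hbad
    · rw [div_le_iff₀ hβ] at hcard
      linarith
    · exact_mod_cast (div_lt_iff₀ (by positivity)).1 hdist
  have hgood : Fintype.card (Fin m → F) < 2 * #{h | (Q x h).eval 0 = g x} := by
    have hsplit : #{h | Q x h = R h} + #{h | Q x h ≠ R h} = Fintype.card F ^ m := by
      rw [← hcardV, ← card_univ]
      exact card_filter_add_card_filter_not _
    have hsub : #{h | Q x h = R h} ≤ #{h | (Q x h).eval 0 = g x} :=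
      card_le_card <| monotone_filter_right _ fun h _ (he : Q x h = R h) => by
        simpa [he] using hRg h 0
    omega
  exact eq_of_card_fiber_le_of_lt_two_mul (fun h => (Q x h).eval 0) (hCorr x (g x)) hgood
end

section
/- Let F be a finite field, d ≥ 0 an integer, and ε a real number with d/|F| ≤ ε ≤ 1/4. Let (r_i)_{i ∈ F} and (c_j)_{j ∈ F} be families of univariate polynomials over F of degree at most d such that the fraction of pairs (i,j) ∈ F × F with r_i(j) ≠ c_j(i) is at most 1/4 - ε. Suppose Q(X,Y) is a bivariate polynomial over F of degree at most d in each variable such that the fraction of pairs (i,j) ∈ F × F with (r_i(j) ≠ Q(i,j) or c_j(i) ≠ Q(i,j)) is at most 1/2 - ε. Then |{i ∈ F : the polynomial r_i(Y) is not equal to Q(i,Y)}| ≤ |F|/4 and |{j ∈ F : the polynomial c_j(X) is not equal to Q(X,j)}| ≤ |F|/4. -/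
/-!
A row `i` with `r_i ≠ Q(i, ·)` disagrees with `Q(i, ·)` at `|F| - d` points or more, because
distinct polynomials of degree at most `d` agree at `d` points or fewer; likewise for columns.
Counting these disagreements against the `1/2 - ε` bound shows that at most half of the rows
and half of the columns are bad. For a bad row `i`, every good column `j` with
`r_i(j) ≠ Q(i, j)` gives `r_i(j) ≠ Q(i, j) = c_j(i)`, and symmetrically for bad columns. So if
`ρ` rows and `γ` columns are bad, `ρ (|F| - d - γ) + γ (|F| - d - ρ) ≤ (1/4 - ε) |F|²`, which forces
`ρ, γ ≤ |F|/4`.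
-/

open Finset Polynomial

theorem Polynomial.card_le_card_filter_eval_ne_add {R : Type*} [CommRing R] [IsDomain R]
    [Fintype R] [DecidableEq R] {p q : R[X]} {d : ℕ} (hpq : p ≠ q) (hp : p.natDegree ≤ d)
    (hq : q.natDegree ≤ d) :
    Fintype.card R ≤ #{x | p.eval x ≠ q.eval x} + d := by
  have hagree : #{x | p.eval x = q.eval x} ≤ d :=
    (card_le_degree_of_subset_roots fun x hx ↦ by
      simpa [mem_roots (sub_ne_zero.mpr hpq), sub_eq_zero] using (mem_filter.mp hx).2).trans
      ((natDegree_sub_le p q).trans (max_le hp hq))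
  calc Fintype.card R = #{x | p.eval x = q.eval x} + #{x | p.eval x ≠ q.eval x} :=
        (card_filter_add_card_filter_not _).symm
    _ ≤ #{x | p.eval x ≠ q.eval x} + d := by omega

namespace MvPolynomial

variable {σ R : Type*} [CommSemiring R]

theorem polynomial_eval_aeval (f : σ → R[X]) (p : MvPolynomial σ R) (x : R) :
    (aeval f p).eval x = eval (fun k ↦ (f k).eval x) p := by
  rw [← Polynomial.coe_aeval_eq_eval, comp_aeval_apply, aeval_eq_eval]

theorem natDegree_aeval_le_degreeOf (f : σ → R[X]) (p : MvPolynomial σ R) (k : σ)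
    (hk : (f k).natDegree ≤ 1) (hf : ∀ k', k' ≠ k → (f k').natDegree = 0) :
    (aeval f p).natDegree ≤ p.degreeOf k := by
  rw [aeval_def, eval₂_eq]
  refine natDegree_sum_le_of_forall_le _ _ fun m hm ↦ ?_
  calc _ ≤ (∏ k' ∈ m.support, f k' ^ m k').natDegree := natDegree_C_mul_le _ _
    _ ≤ ∑ k' ∈ m.support, (f k' ^ m k').natDegree := natDegree_prod_le _ _
    _ = (f k ^ m k).natDegree := by
      refine sum_eq_single k (fun k' _ hk' ↦ ?_) fun hk ↦ ?_
      · simpa [hf k' hk'] using natDegree_pow_le (p := f k') (n := m k')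
      · simp [Finsupp.notMem_support_iff.mp hk]
    _ ≤ m k * 1 := natDegree_pow_le.trans (Nat.mul_le_mul_left _ hk)
    _ ≤ p.degreeOf k := (mul_one (m k)).symm ▸ monomial_le_degreeOf k hm

variable (Q : MvPolynomial (Fin 2) R)

theorem eval_aeval_C_X (i j : R) :
    (aeval ![Polynomial.C i, Polynomial.X] Q).eval j = eval ![i, j] Q := by
  rw [polynomial_eval_aeval]
  congr
  ext k; fin_cases k <;> simp

theorem eval_aeval_X_C (i j : R) :
    (aeval ![Polynomial.X, Polynomial.C j] Q).eval i = eval ![i, j] Q := by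
  rw [polynomial_eval_aeval]
  congr
  ext k; fin_cases k <;> simp

theorem natDegree_aeval_C_X_le (i : R) :
    (aeval ![Polynomial.C i, Polynomial.X] Q).natDegree ≤ Q.degreeOf 1 :=
  natDegree_aeval_le_degreeOf _ Q 1 natDegree_X_le fun k hk ↦ by
    fin_cases k <;> simp_all

theorem natDegree_aeval_X_C_le (j : R) :
    (aeval ![Polynomial.X, Polynomial.C j] Q).natDegree ≤ Q.degreeOf 0 :=
  natDegree_aeval_le_degreeOf _ Q 0 natDegree_X_le fun k hk ↦ by
    fin_cases k <;> simp_all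

end MvPolynomial

namespace Finset

variable {α β : Type*} [Fintype α] [Fintype β] (P : α → β → Prop) [∀ a b, Decidable (P a b)]

theorem card_filter_prod_eq_sum : #{z : α × β | P z.1 z.2} = ∑ a, #{b | P a b} := by
  simp only [card_filter, Fintype.sum_prod_type]

theorem card_filter_prod_swap : #{z : β × α | P z.2 z.1} = #{z : α × β | P z.1 z.2} := by
  simp only [card_filter, Fintype.sum_prod_type]
  exact sum_comm

theorem card_mul_le_card_filter_prod {s : Finset α} {n : ℝ} (h : ∀ a ∈ s, n ≤ #{b | P a b}) :
    #s * n ≤ #{z : α × β | P z.1 z.2} := by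
  rw [card_filter_prod_eq_sum, Nat.cast_sum, ← nsmul_eq_mul]
  exact (card_nsmul_le_sum s _ n h).trans
    (sum_le_sum_of_subset_of_nonneg (subset_univ s) fun _ _ _ ↦ Nat.cast_nonneg _)

end Finset

theorem le_half_of_mul_sub_le {q d ε ρ : ℝ} (hd₀ : 0 ≤ d) (hd : d ≤ ε * q) (hρ₀ : 0 ≤ ρ)
    (hρq : ρ ≤ q) (h : ρ * (q - d) ≤ (1 / 2 - ε) * q ^ 2) : ρ ≤ q / 2 := by
  by_contra! hρ
  have hq : 0 < q := by linarith
  have hε₀ : 0 ≤ ε := nonneg_of_mul_nonneg_left (hd₀.trans hd) hq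
  nlinarith [mul_le_mul_of_nonneg_left hd hρ₀, mul_lt_mul_of_pos_right hρ hq]

-- `ρ (q - d - γ) + γ (q - d - ρ) = (ρ - q/4) (q - d - γ) + γ (3q/4 - d - ρ) + q (q - d) / 4`
theorem le_quarter_of_mul_sub_add_mul_sub_le {q d ε ρ γ : ℝ} (hd₀ : 0 ≤ d) (hd : d ≤ ε * q)
    (hε : ε ≤ 1 / 4) (hγ₀ : 0 ≤ γ) (hρ : ρ ≤ q / 2) (hγ : γ ≤ q / 2)
    (h : ρ * (q - d - γ) + γ * (q - d - ρ) ≤ (1 / 4 - ε) * q ^ 2) : ρ ≤ q / 4 := by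
  by_contra! hρq
  have hq : 0 < q := by linarith
  have hε₀ : 0 ≤ ε := nonneg_of_mul_nonneg_left (hd₀.trans hd) hq
  have hdq : d ≤ q / 4 := by nlinarith
  nlinarith [mul_pos (sub_pos.mpr hρq) (by linarith : 0 < q - d - γ),
    mul_nonneg hγ₀ (by linarith : 0 ≤ 3 * q / 4 - d - ρ), mul_nonneg hq.le (sub_nonneg.mpr hd),
    mul_nonneg hε₀ (sq_nonneg q)]

section RowColumnErrors

-- `rowErr i j` stands for `r_i(j) ≠ Q(i, j)` and `colErr i j` for `c_j(i) ≠ Q(i, j)`.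

variable {ι : Type*} [Fintype ι] (rowErr colErr : ι → ι → Prop)
  [∀ i j, Decidable (rowErr i j)] [∀ i j, Decidable (colErr i j)]

theorem card_mul_sub_le_card_filter_prod {R : Finset ι} {d : ℕ}
    (hR : ∀ i ∈ R, Fintype.card ι ≤ #{j | rowErr i j} + d) :
    (#R : ℝ) * (Fintype.card ι - d) ≤ #{z : ι × ι | rowErr z.1 z.2} :=
  card_mul_le_card_filter_prod rowErr fun i hi ↦ by
    rw [sub_le_iff_le_add]; exact_mod_cast hR i hi

theorem card_mul_sub_sub_le_card_filter_prod_and_not {R C : Finset ι} {d : ℕ}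
    (hR : ∀ i ∈ R, Fintype.card ι ≤ #{j | rowErr i j} + d) (hC : ∀ i j, colErr i j → j ∈ C) :
    (#R : ℝ) * (Fintype.card ι - d - #C) ≤
      #{z : ι × ι | rowErr z.1 z.2 ∧ ¬colErr z.1 z.2} := by
  classical
  refine card_mul_le_card_filter_prod (fun i j ↦ rowErr i j ∧ ¬colErr i j) fun i hi ↦ ?_
  have hsub : ({j | rowErr i j} : Finset ι) ⊆ ({j | rowErr i j ∧ ¬colErr i j} : Finset ι) ∪ C := by
    intro j hj
    by_cases hj' : colErr i j
    · exact mem_union_right _ (hC i j hj')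
    · exact mem_union_left _ (mem_filter.mpr ⟨mem_univ j, (mem_filter.mp hj).2, hj'⟩)
  have hcard : Fintype.card ι ≤ #{j | rowErr i j ∧ ¬colErr i j} + #C + d :=
    (hR i hi).trans (Nat.add_le_add_right ((card_le_card hsub).trans (card_union_le _ _)) d)
  rw [sub_sub, sub_le_iff_le_add]
  exact_mod_cast hcard.trans_eq (by ring)

theorem card_le_quarter_of_card_xor_le {R C : Finset ι} {d : ℕ} {ε : ℝ}
    (hd : d ≤ ε * Fintype.card ι) (hε : ε ≤ 1 / 4)
    (hR : ∀ i ∈ R, Fintype.card ι ≤ #{j | rowErr i j} + d)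
    (hC : ∀ j ∈ C, Fintype.card ι ≤ #{i | colErr i j} + d)
    (hRerr : ∀ i j, rowErr i j → i ∈ R) (hCerr : ∀ i j, colErr i j → j ∈ C)
    (hErr : (#{z : ι × ι | rowErr z.1 z.2 ∨ colErr z.1 z.2} : ℝ) ≤
      (1 / 2 - ε) * Fintype.card ι ^ 2)
    (hXor : (#{z : ι × ι | Xor (rowErr z.1 z.2) (colErr z.1 z.2)} : ℝ) ≤
      (1 / 4 - ε) * Fintype.card ι ^ 2) :
    (#R : ℝ) ≤ Fintype.card ι / 4 ∧ (#C : ℝ) ≤ Fintype.card ι / 4 := by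
  have hErr_row : (#{z : ι × ι | rowErr z.1 z.2} : ℝ) ≤ (1 / 2 - ε) * Fintype.card ι ^ 2 :=
    le_trans (by exact_mod_cast card_le_card (monotone_filter_right _ fun _ _ ↦ Or.inl)) hErr
  have hErr_col : (#{z : ι × ι | colErr z.1 z.2} : ℝ) ≤ (1 / 2 - ε) * Fintype.card ι ^ 2 :=
    le_trans (by exact_mod_cast card_le_card (monotone_filter_right _ fun _ _ ↦ Or.inr)) hErr
  have hρ : (#R : ℝ) ≤ Fintype.card ι / 2 :=
    le_half_of_mul_sub_le d.cast_nonneg hd (#R).cast_nonneg (by exact_mod_cast card_le_univ R)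
      ((card_mul_sub_le_card_filter_prod rowErr hR).trans hErr_row)
  have hγ : (#C : ℝ) ≤ Fintype.card ι / 2 := by
    refine le_half_of_mul_sub_le d.cast_nonneg hd (#C).cast_nonneg
      (by exact_mod_cast card_le_univ C) (le_trans ?_ hErr_col)
    rw [← card_filter_prod_swap colErr]
    exact card_mul_sub_le_card_filter_prod (fun j i ↦ colErr i j) hC
  have hsplit : (#R : ℝ) * (Fintype.card ι - d - #C) + #C * (Fintype.card ι - d - #R) ≤
      #{z : ι × ι | Xor (rowErr z.1 z.2) (colErr z.1 z.2)} := by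
    classical
    have hrow := card_mul_sub_sub_le_card_filter_prod_and_not rowErr colErr hR hCerr
    have hcol := card_mul_sub_sub_le_card_filter_prod_and_not (fun j i ↦ colErr i j)
      (fun j i ↦ rowErr i j) hC fun j i ↦ hRerr i j
    rw [card_filter_prod_swap (fun i j ↦ colErr i j ∧ ¬rowErr i j)] at hcol
    have hdisj : Disjoint ({z | rowErr z.1 z.2 ∧ ¬colErr z.1 z.2} : Finset (ι × ι))
        ({z | colErr z.1 z.2 ∧ ¬rowErr z.1 z.2} : Finset (ι × ι)) :=
      disjoint_filter.mpr fun _ _ h h' ↦ h'.2 h.1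
    calc _ ≤ (#{z : ι × ι | rowErr z.1 z.2 ∧ ¬colErr z.1 z.2} : ℝ) +
          #{z : ι × ι | colErr z.1 z.2 ∧ ¬rowErr z.1 z.2} := add_le_add hrow hcol
      _ = #{z : ι × ι | Xor (rowErr z.1 z.2) (colErr z.1 z.2)} := by
        rw [← Nat.cast_add, ← card_union_of_disjoint hdisj, ← filter_or]; rfl
  exact ⟨le_quarter_of_mul_sub_add_mul_sub_le d.cast_nonneg hd hε (#C).cast_nonneg hρ hγ
      (hsplit.trans hXor),
    le_quarter_of_mul_sub_add_mul_sub_le d.cast_nonneg hd hε (#R).cast_nonneg hγ hρ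
      (by linarith)⟩

end RowColumnErrors

/-- strengthening step: Let `F` be a finite field, `d ≥ 0`, and
`d/|F| ≤ ε ≤ 1/4`. Let `(r_i)` and `(c_j)` be families of univariate polynomials of
degree at most `d` with the fraction of pairs `(i,j)` where `r_i(j) ≠ c_j(i)` at most
`1/4 - ε`. If `Q` is a bivariate polynomial of degree at most `d` in each variable
such that the fraction of pairs `(i,j)` with `r_i(j) ≠ Q(i,j)` or `c_j(i) ≠ Q(i,j)`
is at most `1/2 - ε`, then `r_i(Y) = Q(i,Y)` for all but at most `|F|/4` of the
`i`'s, and `c_j(X) = Q(X,j)` for all but at most `|F|/4` of the `j`'s. -/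
theorem row_col_agreement_strengthen
    (F : Type) [Field F] [Fintype F] [DecidableEq F] (d : ℕ) (ε : ℝ)
    (hεl : (d : ℝ) / (Fintype.card F : ℝ) ≤ ε) (hεu : ε ≤ 1 / 4)
    (r c : F → Polynomial F)
    (hr : ∀ i, (r i).natDegree ≤ d) (hc : ∀ j, (c j).natDegree ≤ d)
    (hdisagree : ((Finset.univ.filter fun z : F × F =>
        (r z.1).eval z.2 ≠ (c z.2).eval z.1).card : ℝ) /
      (Fintype.card F : ℝ) ^ 2 ≤ 1 / 4 - ε)
    (Q : MvPolynomial (Fin 2) F)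
    (hQ0 : Q.degreeOf 0 ≤ d) (hQ1 : Q.degreeOf 1 ≤ d)
    (hQclose : ((Finset.univ.filter fun z : F × F =>
        (r z.1).eval z.2 ≠ MvPolynomial.eval ![z.1, z.2] Q ∨
        (c z.2).eval z.1 ≠ MvPolynomial.eval ![z.1, z.2] Q).card : ℝ) /
      (Fintype.card F : ℝ) ^ 2 ≤ 1 / 2 - ε) :
    ((Finset.univ.filter fun i : F =>
        r i ≠ MvPolynomial.aeval ![Polynomial.C i, Polynomial.X] Q).card : ℝ) ≤
      (Fintype.card F : ℝ) / 4 ∧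
    ((Finset.univ.filter fun j : F =>
        c j ≠ MvPolynomial.aeval ![Polynomial.X, Polynomial.C j] Q).card : ℝ) ≤
      (Fintype.card F : ℝ) / 4 := by
  have hq : (0 : ℝ) < Fintype.card F := by exact_mod_cast Fintype.card_pos
  refine card_le_quarter_of_card_xor_le (fun i j ↦ (r i).eval j ≠ MvPolynomial.eval ![i, j] Q)
    (fun i j ↦ (c j).eval i ≠ MvPolynomial.eval ![i, j] Q) (by rwa [div_le_iff₀ hq] at hεl) hεu
    (fun i hi ↦ ?_) (fun j hj ↦ ?_) (fun i j h ↦ ?_) (fun i j h ↦ ?_)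
    (by rwa [div_le_iff₀ (by positivity)] at hQclose) ?_
  · simpa only [MvPolynomial.eval_aeval_C_X] using card_le_card_filter_eval_ne_add
      (mem_filter.mp hi).2 (hr i) ((MvPolynomial.natDegree_aeval_C_X_le Q i).trans hQ1)
  · simpa only [MvPolynomial.eval_aeval_X_C] using card_le_card_filter_eval_ne_add
      (mem_filter.mp hj).2 (hc j) ((MvPolynomial.natDegree_aeval_X_C_le Q j).trans hQ0)
  · refine mem_filter.mpr ⟨mem_univ i, fun hri ↦ h ?_⟩
    rw [hri, MvPolynomial.eval_aeval_C_X]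
  · refine mem_filter.mpr ⟨mem_univ j, fun hcj ↦ h ?_⟩
    rw [hcj, MvPolynomial.eval_aeval_X_C]
  · refine le_trans ?_ ((div_le_iff₀ (by positivity)).mp hdisagree)
    refine Nat.cast_le.mpr (card_le_card (monotone_filter_right _ fun z _ hz ↦ ?_))
    rcases hz with ⟨hr, hc⟩ | ⟨hc, hr⟩
    · rwa [not_ne_iff.mp hc]
    · rw [not_ne_iff.mp hr]; exact hc.symm
end

section
/- Let H be a nonempty finite set, S any type, and v : H → S a function. Suppose a ∈ S is a plurality value of v, i.e., |{h ∈ H : v(h) = a}| ≥ |{h ∈ H : v(h) = b}| for every b ∈ S. Then |{h ∈ H : v(h) ≠ a}| / |H| ≤ |{(h₁,h₂) ∈ H × H : v(h₁) ≠ v(h₂)}| / |H|². -/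
/-!
Counting equal pairs fibrewise over the first coordinate, the number of pairs with
`v h₁ = v h₂` is `∑ h, #{h' | v h' = v h}`, and each summand is at most the plurality
count `m`. Hence at most `|H| * m` pairs are equal, so at least `|H| * (|H| - m)` are
unequal, which is `|H|²` times the left-hand fraction.
-/

open Finset

section
variable {α β : Type*} [Fintype α] [DecidableEq β]

theorem card_filter_apply_eq_apply_eq_sum (f : α → β) :
    #{z : α × α | f z.1 = f z.2} = ∑ x, #{y | f y = f x} := by
  simp only [card_filter, Fintype.sum_prod_type]
  exact Finset.sum_congr rfl fun x _ => Finset.sum_congr rfl fun y _ => by simp only [eq_comm]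

theorem card_filter_apply_eq_apply_eq_le {f : α → β} {m : ℕ} (hm : ∀ b, #{x | f x = b} ≤ m) :
    #{z : α × α | f z.1 = f z.2} ≤ Fintype.card α * m := by
  rw [card_filter_apply_eq_apply_eq_sum]
  simpa using Finset.sum_le_sum fun x (_ : x ∈ univ) => hm (f x)

theorem card_mul_card_filter_ne_le {f : α → β} {a : β}
    (ha : ∀ b, #{x | f x = b} ≤ #{x | f x = a}) :
    Fintype.card α * #{x | f x ≠ a} ≤ #{z : α × α | f z.1 ≠ f z.2} := by
  have hfiber : #{x | f x = a} + #{x | f x ≠ a} = Fintype.card α :=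
    card_filter_add_card_filter_not _
  have hpairs :
      #{z : α × α | f z.1 = f z.2} + #{z : α × α | f z.1 ≠ f z.2} = Fintype.card α ^ 2 := by
    rw [sq, ← Fintype.card_prod]; exact card_filter_add_card_filter_not _
  have hequal := card_filter_apply_eq_apply_eq_le ha
  nlinarith
end

theorem plurality_le_collision_general
    (H S : Type) [Fintype H] [DecidableEq S]
    (v : H → S) (a : S)
    (ha : ∀ b : S, (Finset.univ.filter fun h : H => v h = b).card ≤
      (Finset.univ.filter fun h : H => v h = a).card) :
    ((Finset.univ.filter fun h : H => v h ≠ a).card : ℝ) / (Fintype.card H : ℝ) ≤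
    ((Finset.univ.filter fun z : H × H => v z.1 ≠ v z.2).card : ℝ) /
      (Fintype.card H : ℝ) ^ 2 := by
  have key : (Fintype.card H * #{h | v h ≠ a} : ℝ) ≤ #{z : H × H | v z.1 ≠ v z.2} :=
    mod_cast card_mul_card_filter_ne_le ha
  calc ((#{h | v h ≠ a} : ℕ) : ℝ) / Fintype.card H
      = (Fintype.card H * #{h | v h ≠ a} : ℝ) / (Fintype.card H : ℝ) ^ 2 := by
        obtain hn | hn := eq_or_ne (Fintype.card H : ℝ) 0
        · simp [hn]
        · rw [sq, mul_div_mul_left _ _ hn]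
    _ ≤ _ := by gcongr

/-- plurality vs. collision probability: If `a` is a plurality value of
`v : H → S` on a nonempty finite set `H`, then the fraction of `h` with `v h ≠ a` is
at most the fraction of pairs `(h₁,h₂)` with `v h₁ ≠ v h₂`. -/
theorem plurality_le_collision
    (H S : Type) [Fintype H] [Nonempty H] [DecidableEq S]
    (v : H → S) (a : S)
    (ha : ∀ b : S, (Finset.univ.filter fun h : H => v h = b).card ≤
      (Finset.univ.filter fun h : H => v h = a).card) :
    ((Finset.univ.filter fun h : H => v h ≠ a).card : ℝ) / (Fintype.card H : ℝ) ≤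
    ((Finset.univ.filter fun z : H × H => v z.1 ≠ v z.2).card : ℝ) /
      (Fintype.card H : ℝ) ^ 2 :=
  plurality_le_collision_general H S v a ha
end
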